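/- Let Φ ∈ ℝ^{S×d} have full column rank, D = diag(d_π) with d_π a positive probability vector, and P_π ∈ ℝ^{S×S} a row-stochastic matrix with stationary distribution d_π (d_πᵀ P_π = d_πᵀ). For γ ∈ [0,1), the matrix A = Φᵀ D (γ P_π − I) Φ satisfies xᵀ A x ≤ −(1−γ) xᵀ Φᵀ D Φ x for all x ∈ ℝ^d; in particular A is negative definite and the projected Bellman equation Φθ = Π_φ[r_π + γP_πΦθ] has a unique solution. -/
import Mathlib


open Matrix


-- Jensen-type: ∑ d q² ≤ ∑ d y² with q = Pπ *ᵥ y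
lemma aux_jensen {S : ℕ} (dπ : Fin S → ℝ) (hd : ∀ s, 0 < dπ s)
    (Pπ : Matrix (Fin S) (Fin S) ℝ) (hP0 : ∀ s s', 0 ≤ Pπ s s')
    (hProw : ∀ s, ∑ s', Pπ s s' = 1)
    (hstat : Matrix.vecMul dπ Pπ = dπ) (y : Fin S → ℝ) :
    ∑ s, dπ s * (Pπ.mulVec y s) ^ 2 ≤ ∑ s, dπ s * (y s) ^ 2 := by
  have step : ∀ s, dπ s * (Pπ.mulVec y s) ^ 2 ≤ dπ s * ∑ t, Pπ s t * (y t) ^ 2 := by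
    intro s
    refine mul_le_mul_of_nonneg_left ?_ (hd s).le
    have cs := Finset.sum_mul_sq_le_sq_mul_sq Finset.univ
      (fun t => Real.sqrt (Pπ s t)) (fun t => Real.sqrt (Pπ s t) * y t)
    have h1 : ∀ t, Real.sqrt (Pπ s t) * (Real.sqrt (Pπ s t) * y t) = Pπ s t * y t := by
      intro t; rw [← mul_assoc, Real.mul_self_sqrt (hP0 s t)]
    have h2 : ∀ t, (Real.sqrt (Pπ s t)) ^ 2 = Pπ s t := fun t => Real.sq_sqrt (hP0 s t)
    have h3 : ∀ t, (Real.sqrt (Pπ s t) * y t) ^ 2 = Pπ s t * (y t) ^ 2 := by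
      intro t; rw [mul_pow, h2]
    simp only [h1, h2, h3, hProw s, one_mul] at cs
    simpa [Matrix.mulVec, dotProduct] using cs
  calc ∑ s, dπ s * (Pπ.mulVec y s) ^ 2
      ≤ ∑ s, dπ s * ∑ t, Pπ s t * (y t) ^ 2 := Finset.sum_le_sum fun s _ => step s
    _ = ∑ t, (∑ s, dπ s * Pπ s t) * (y t) ^ 2 := by
        simp only [Finset.mul_sum, Finset.sum_mul]
        rw [Finset.sum_comm]
        exact Finset.sum_congr rfl fun t _ => Finset.sum_congr rfl fun s _ => by ring
    _ = ∑ t, dπ t * (y t) ^ 2 := by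
        refine Finset.sum_congr rfl fun t _ => ?_
        have := congrFun hstat t
        simp [Matrix.vecMul, dotProduct] at this
        rw [this]

lemma aux_cs {S : ℕ} (dπ : Fin S → ℝ) (hd : ∀ s, 0 < dπ s)
    (y q : Fin S → ℝ) (hq : ∑ s, dπ s * q s ^ 2 ≤ ∑ s, dπ s * y s ^ 2) :
    ∑ s, dπ s * (y s * q s) ≤ ∑ s, dπ s * y s ^ 2 := by
  set a := ∑ s, dπ s * (y s * q s)
  set b := ∑ s, dπ s * y s ^ 2 with hb
  have hbnn : 0 ≤ b := Finset.sum_nonneg fun s _ => mul_nonneg (hd s).le (sq_nonneg _)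
  have cs := Finset.sum_mul_sq_le_sq_mul_sq Finset.univ
    (fun s => Real.sqrt (dπ s) * y s) (fun s => Real.sqrt (dπ s) * q s)
  have h1 : ∀ s, (Real.sqrt (dπ s) * y s) * (Real.sqrt (dπ s) * q s) = dπ s * (y s * q s) := by
    intro s
    rw [mul_mul_mul_comm, Real.mul_self_sqrt (hd s).le]
  have h2 : ∀ s, (Real.sqrt (dπ s) * y s) ^ 2 = dπ s * y s ^ 2 := by
    intro s; rw [mul_pow, Real.sq_sqrt (hd s).le]
  have h3 : ∀ s, (Real.sqrt (dπ s) * q s) ^ 2 = dπ s * q s ^ 2 := by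
    intro s; rw [mul_pow, Real.sq_sqrt (hd s).le]
  simp only [h1, h2, h3] at cs
  have : a ^ 2 ≤ b ^ 2 := by
    calc a ^ 2 ≤ b * ∑ s, dπ s * q s ^ 2 := cs
      _ ≤ b * b := mul_le_mul_of_nonneg_left hq hbnn
      _ = b ^ 2 := (sq b).symm
  nlinarith

theorem stmt12 {S d : ℕ} (Φ : Matrix (Fin S) (Fin d) ℝ)
    (hΦ : Function.Injective Φ.mulVec)
    (dπ : Fin S → ℝ) (hd : ∀ s, 0 < dπ s) (hd1 : ∑ s, dπ s = 1)
    (Pπ : Matrix (Fin S) (Fin S) ℝ) (hP0 : ∀ s s', 0 ≤ Pπ s s')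
    (hProw : ∀ s, ∑ s', Pπ s s' = 1)
    (hstat : Matrix.vecMul dπ Pπ = dπ)
    (γ : ℝ) (hγ0 : 0 ≤ γ) (hγ1 : γ < 1)
    (rπ : Fin S → ℝ) :
    ∀ (D : Matrix (Fin S) (Fin S) ℝ) (A : Matrix (Fin d) (Fin d) ℝ)
      (Proj : Matrix (Fin S) (Fin S) ℝ),
      D = Matrix.diagonal dπ →
      A = Φᵀ * D * (γ • Pπ - 1) * Φ →
      Proj = Φ * (Φᵀ * D * Φ)⁻¹ * Φᵀ * D →
      (∀ x : Fin d → ℝ,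
          x ⬝ᵥ A.mulVec x ≤ -(1 - γ) * (x ⬝ᵥ (Φᵀ * D * Φ).mulVec x)) ∧
      (∀ x : Fin d → ℝ, x ≠ 0 → x ⬝ᵥ A.mulVec x < 0) ∧
      (∃! θ : Fin d → ℝ,
          Φ.mulVec θ = Proj.mulVec (rπ + γ • (Pπ * Φ).mulVec θ)) := by
  intro D A Proj hD hA hProj
  subst hD hA hProj
  -- quadratic-form computation for matrices of shape Φᵀ D B Φ
  have hform : ∀ (B : Matrix (Fin S) (Fin S) ℝ) (x : Fin d → ℝ),
      x ⬝ᵥ (Φᵀ * Matrix.diagonal dπ * B * Φ).mulVec x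
        = ∑ s, dπ s * (Φ.mulVec x s * (B.mulVec (Φ.mulVec x)) s) := by
    intro B x
    simp only [← Matrix.mulVec_mulVec]
    rw [Matrix.dotProduct_mulVec, Matrix.vecMul_transpose]
    simp only [dotProduct, Matrix.mulVec_diagonal]
    exact Finset.sum_congr rfl fun s _ => by ring
  have hformM : ∀ x : Fin d → ℝ,
      x ⬝ᵥ (Φᵀ * Matrix.diagonal dπ * Φ).mulVec x
        = ∑ s, dπ s * (Φ.mulVec x s) ^ 2 := by
    intro x
    simp only [← Matrix.mulVec_mulVec]
    rw [Matrix.dotProduct_mulVec, Matrix.vecMul_transpose]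
    simp only [dotProduct, Matrix.mulVec_diagonal]
    exact Finset.sum_congr rfl fun s _ => by ring
  -- part 1
  have part1 : ∀ x : Fin d → ℝ,
      x ⬝ᵥ (Φᵀ * Matrix.diagonal dπ * (γ • Pπ - 1) * Φ).mulVec x
        ≤ -(1 - γ) * (x ⬝ᵥ (Φᵀ * Matrix.diagonal dπ * Φ).mulVec x) := by
    intro x
    set y := Φ.mulVec x with hy
    set q := Pπ.mulVec y with hq
    have e1 : x ⬝ᵥ (Φᵀ * Matrix.diagonal dπ * (γ • Pπ - 1) * Φ).mulVec x
        = γ * (∑ s, dπ s * (y s * q s)) - ∑ s, dπ s * y s ^ 2 := by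
      rw [hform]
      rw [Finset.mul_sum, ← Finset.sum_sub_distrib]
      refine Finset.sum_congr rfl fun s _ => ?_
      rw [Matrix.sub_mulVec, Matrix.smul_mulVec, Matrix.one_mulVec]
      simp only [Pi.sub_apply, Pi.smul_apply, smul_eq_mul]
      ring
    have hcs := aux_cs dπ hd y q (aux_jensen dπ hd Pπ hP0 hProw hstat y)
    rw [e1, hformM]
    have := mul_le_mul_of_nonneg_left hcs hγ0
    nlinarith [this]
  -- positivity of the Gram form
  have hposM : ∀ x : Fin d → ℝ, x ≠ 0 →
      0 < x ⬝ᵥ (Φᵀ * Matrix.diagonal dπ * Φ).mulVec x := by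
    intro x hx
    rw [hformM]
    have hy : Φ.mulVec x ≠ 0 := by
      intro h
      exact hx (hΦ (by rw [h, Matrix.mulVec_zero]))
    obtain ⟨s, hs⟩ := Function.ne_iff.mp hy
    refine Finset.sum_pos' (fun t _ => mul_nonneg (hd t).le (sq_nonneg _)) ⟨s, Finset.mem_univ s, ?_⟩
    exact mul_pos (hd s) (sq_pos_of_ne_zero (by simpa using hs))
  -- part 2
  have part2 : ∀ x : Fin d → ℝ, x ≠ 0 →
      x ⬝ᵥ (Φᵀ * Matrix.diagonal dπ * (γ • Pπ - 1) * Φ).mulVec x < 0 := by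
    intro x hx
    have h1 := part1 x
    have h2 := hposM x hx
    nlinarith [h1, h2]
  refine ⟨part1, part2, ?_⟩
  -- abbreviations
  set M := Φᵀ * Matrix.diagonal dπ * Φ with hM
  set A := Φᵀ * Matrix.diagonal dπ * (γ • Pπ - 1) * Φ with hAdef
  set N := Φᵀ * Matrix.diagonal dπ * Pπ * Φ with hN
  set r' := (Φᵀ * Matrix.diagonal dπ).mulVec rπ with hr'
  -- injectivity of M and A
  have hMinj : Function.Injective M.mulVec := by
    intro a b hab
    by_contra hne
    have hne' : a - b ≠ 0 := sub_ne_zero.mpr hne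
    have h0 : M.mulVec (a - b) = 0 := by
      rw [Matrix.mulVec_sub, hab, sub_self]
    have := hposM (a - b) hne'
    rw [h0, dotProduct_zero] at this
    exact lt_irrefl 0 this
  have hAinj : Function.Injective A.mulVec := by
    intro a b hab
    by_contra hne
    have hne' : a - b ≠ 0 := sub_ne_zero.mpr hne
    have h0 : A.mulVec (a - b) = 0 := by
      rw [Matrix.mulVec_sub, hab, sub_self]
    have := part2 (a - b) hne'
    rw [h0, dotProduct_zero] at this
    exact lt_irrefl 0 this
  have hMdet : IsUnit M.det :=
    (Matrix.isUnit_iff_isUnit_det M).mp (Matrix.mulVec_injective_iff_isUnit.mp hMinj)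
  have hAdet : IsUnit A.det :=
    (Matrix.isUnit_iff_isUnit_det A).mp (Matrix.mulVec_injective_iff_isUnit.mp hAinj)
  have hMi : M * M⁻¹ = 1 := Matrix.mul_nonsing_inv M hMdet
  have hMi' : M⁻¹ * M = 1 := Matrix.nonsing_inv_mul M hMdet
  have hAi : A * A⁻¹ = 1 := Matrix.mul_nonsing_inv A hAdet
  -- A = γ • N - M
  have hA' : A = γ • N - M := by
    rw [hAdef, hN, hM, Matrix.mul_sub, Matrix.mul_one, Matrix.sub_mul, Matrix.mul_smul,
      Matrix.smul_mul]
  have hAv : ∀ θ, A.mulVec θ = γ • N.mulVec θ - M.mulVec θ := by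
    intro θ
    rw [hA', Matrix.sub_mulVec, Matrix.smul_mulVec]
  -- (Φᵀ D) (Φ M⁻¹ Φᵀ D) = Φᵀ D
  have hPD : (Φᵀ * Matrix.diagonal dπ) * (Φ * M⁻¹ * Φᵀ * Matrix.diagonal dπ)
      = Φᵀ * Matrix.diagonal dπ := by
    calc (Φᵀ * Matrix.diagonal dπ) * (Φ * M⁻¹ * Φᵀ * Matrix.diagonal dπ)
        = (M * M⁻¹) * (Φᵀ * Matrix.diagonal dπ) := by
          rw [hM]; simp only [Matrix.mul_assoc]
      _ = Φᵀ * Matrix.diagonal dπ := by rw [hMi, Matrix.one_mul]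
  -- expand Φᵀ D applied to bellman RHS vector
  have hbexp : ∀ θ : Fin d → ℝ,
      (Φᵀ * Matrix.diagonal dπ).mulVec (rπ + γ • (Pπ * Φ).mulVec θ)
        = r' + γ • N.mulVec θ := by
    intro θ
    rw [Matrix.mulVec_add, Matrix.mulVec_smul, Matrix.mulVec_mulVec, hr', hN,
      ← Matrix.mul_assoc]
  -- key equivalence
  have hiff : ∀ θ : Fin d → ℝ,
      (Φ.mulVec θ = (Φ * M⁻¹ * Φᵀ * Matrix.diagonal dπ).mulVec
          (rπ + γ • (Pπ * Φ).mulVec θ)) ↔ A.mulVec θ = -r' := by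
    intro θ
    constructor
    · intro h
      have h1 := congrArg ((Φᵀ * Matrix.diagonal dπ).mulVec) h
      rw [Matrix.mulVec_mulVec, Matrix.mulVec_mulVec, hPD, ← hM, hbexp] at h1
      rw [hAv, h1]
      abel
    · intro h
      have h2 : γ • N.mulVec θ - M.mulVec θ = -r' := by rw [← hAv]; exact h
      rw [sub_eq_iff_eq_add] at h2
      have h3 : M.mulVec θ = r' + γ • N.mulVec θ := by rw [h2]; abel
      have hMθ : M.mulVec θ = (Φᵀ * Matrix.diagonal dπ).mulVec
          (rπ + γ • (Pπ * Φ).mulVec θ) := by rw [hbexp, h3]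
      rw [Matrix.mul_assoc (Φ * M⁻¹) Φᵀ (Matrix.diagonal dπ), ← Matrix.mulVec_mulVec,
        ← hMθ, Matrix.mulVec_mulVec, Matrix.mul_assoc, hMi', Matrix.mul_one]
  -- existence and uniqueness
  have hθ0 : A.mulVec (A⁻¹.mulVec (-r')) = -r' := by
    rw [Matrix.mulVec_mulVec, hAi, Matrix.one_mulVec]
  exact ⟨A⁻¹.mulVec (-r'), (hiff _).mpr hθ0,
    fun θ hθ => hAinj (by rw [(hiff θ).mp hθ, hθ0])⟩
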